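/- Let c > 0, ε > 0 and 0 < δ ≤ εc/5 be constants and let n be sufficiently large. Let G and F be edge-disjoint graphs on the vertex set [n] such that G is d-regular with d ≥ εcn, and such that for any two sets A, B ⊆ [n] with |A| ≥ δ²n and |B| ≥ (1/2 - δ)n there is at least one edge of F between A and B. Then for any vertices x, y ∈ [n] and any set S ⊆ [n] of size |S| ≤ n^{0.6}, there exist vertices x₁, x₂, y₁, y₂ ∈ [n] \ S such that xx₁, yy₁, x₂y₂ are edges of G and x₁x₂, y₁y₂ are edges of F. -/

import Mathlib

open SimpleGraph

/-- The degree of a vertex, defined via `Set.ncard` (no decidability assumptions). -/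
noncomputable def degN {V : Type*} (G : SimpleGraph V) (v : V) : ℕ :=
  (G.neighborSet v).ncard

/-- `G` is `d`-regular. -/
def IsRegN {V : Type*} (G : SimpleGraph V) (d : ℕ) : Prop :=
  ∀ v, degN G v = d

/-- `H` (a spanning subgraph, viewed as a graph on the full vertex set) is a
Hamilton cycle: it is connected and 2-regular. -/
def IsHamCycleGraph {V : Type*} (H : SimpleGraph V) : Prop :=
  H.Connected ∧ IsRegN H 2

/-- `D` is a Hamiltonian decomposition of `Γ`: a family of pairwise edge-disjoint
Hamilton cycles whose union is `Γ`. -/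
def IsHamDecomp {V : Type*} (Γ : SimpleGraph V) (D : Finset (SimpleGraph V)) : Prop :=
  (∀ H ∈ D, IsHamCycleGraph H) ∧
  (D : Set (SimpleGraph V)).Pairwise Disjoint ∧
  D.sup id = Γ

/-- The number of Hamiltonian decompositions of `Γ`. -/
noncomputable def numHamDecomp {V : Type*} (Γ : SimpleGraph V) : ℕ :=
  {D : Finset (SimpleGraph V) | IsHamDecomp Γ D}.ncard

/-- The number of edges of `G` with one endpoint in `A` and the other endpoint in `B`
(edges with both endpoints in `A ∩ B` are counted once). -/
noncomputable def eBetween {V : Type*} (G : SimpleGraph V) (A B : Set V) : ℕ :=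
  {e ∈ G.edgeSet | ∃ a ∈ A, ∃ b ∈ B, e = s(a, b)}.ncard

/-!
For large `n` we have `|S| ≤ n^0.6 ≤ δn`, so every vertex `z` keeps at least
`d - |S| ≥ 5δn - δn ≥ δ²n` of its `G`-neighbours outside `S`. By the expansion property of `F`,
fewer than `(1/2 - δ)n` vertices have no `F`-neighbour among them, so more than `n/2` vertices
outside `S` are `F`-adjacent to a `G`-neighbour of `z` outside `S`. The two such sets for `z = x`
and `z = y` have sizes summing to more than `n`, and a double count in the `d`-regular graph `G`
yields a `G`-edge `x₂y₂` between them.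
-/

open Filter Finset

variable {V : Type*}

theorem IsRegN.isRegularOfDegree [Fintype V] {G : SimpleGraph V} [DecidableRel G.Adj] {d : ℕ}
    (h : IsRegN G d) : G.IsRegularOfDegree d := fun v => by
  rw [← h v, degN, Set.ncard_eq_toFinset_card', ← card_neighborFinset_eq_degree]
  rfl

theorem exists_adj_of_one_le_eBetween {F : SimpleGraph V} {A B : Set V}
    (h : 1 ≤ eBetween F A B) : ∃ a ∈ A, ∃ b ∈ B, F.Adj a b := by
  obtain ⟨_, he, a, ha, b, hb, rfl⟩ := Set.nonempty_of_ncard_ne_zero (Nat.one_le_iff_ne_zero.1 h)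
  exact ⟨a, ha, b, hb, he⟩

theorem ncard_setOf_forall_not_adj_lt {F : SimpleGraph V} {α β : ℝ}
    (hF : ∀ A B : Set V, α ≤ A.ncard → β ≤ B.ncard → 1 ≤ eBetween F A B)
    {A : Set V} (hA : α ≤ A.ncard) : ({v | ∀ a ∈ A, ¬ F.Adj a v}.ncard : ℝ) < β := by
  by_contra! hB
  obtain ⟨a, ha, b, hb, hab⟩ := exists_adj_of_one_le_eBetween (hF _ _ hA hB)
  exact hb a ha hab

theorem ncard_compl_setOf_adj_lt [Finite V] {F : SimpleGraph V} {α β : ℝ}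
    (hF : ∀ A B : Set V, α ≤ A.ncard → β ≤ B.ncard → 1 ≤ eBetween F A B)
    {A : Set V} (hA : α ≤ A.ncard) (S : Set V) :
    ({v | v ∉ S ∧ ∃ a ∈ A, F.Adj a v}ᶜ.ncard : ℝ) < β + S.ncard := by
  have hsub : {v | v ∉ S ∧ ∃ a ∈ A, F.Adj a v}ᶜ ⊆ {v | ∀ a ∈ A, ¬ F.Adj a v} ∪ S := by
    intro v hv
    by_cases hvS : v ∈ S
    · exact Or.inr hvS
    · exact Or.inl fun a ha hav => hv ⟨hvS, a, ha, hav⟩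
  have hle : ({v | v ∉ S ∧ ∃ a ∈ A, F.Adj a v}ᶜ.ncard : ℝ) ≤
      {v | ∀ a ∈ A, ¬ F.Adj a v}.ncard + S.ncard := by
    exact_mod_cast (Set.ncard_le_ncard hsub).trans (Set.ncard_union_le _ _)
  linarith [ncard_setOf_forall_not_adj_lt hF hA]

/-- If no edge goes from `X` to `Y`, all `d |X|` edge ends leaving `X` land in `Yᶜ`, which
receives at most `d |Yᶜ|` of them. -/
theorem exists_adj_of_ncard_compl_lt [Fintype V] {G : SimpleGraph V} [DecidableRel G.Adj]
    {d : ℕ} (hreg : G.IsRegularOfDegree d) (hd : 0 < d) {X Y : Set V}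
    (h : Yᶜ.ncard < X.ncard) : ∃ u ∈ X, ∃ v ∈ Y, G.Adj u v := by
  classical
  by_contra! hXY
  have hcount : #X.toFinset * d ≤ #Yᶜ.toFinset * d := by
    refine card_mul_le_card_mul G.Adj (fun u hu => ?_) (fun v _ => ?_)
    · rw [← hreg.degree_eq u, ← card_neighborFinset_eq_degree]
      refine card_le_card fun v hv => (mem_bipartiteAbove _).2 ⟨?_, (mem_neighborFinset _ _ _).1 hv⟩
      simpa using fun hvY => hXY u (by simpa using hu) v hvY ((mem_neighborFinset _ _ _).1 hv)
    · rw [← hreg.degree_eq v, ← card_neighborFinset_eq_degree]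
      exact card_le_card fun u hu =>
        (mem_neighborFinset _ _ _).2 ((mem_bipartiteBelow _).1 hu).2.symm
  rw [Set.ncard_eq_toFinset_card', Set.ncard_eq_toFinset_card'] at h
  exact (Nat.le_of_mul_le_mul_right hcount hd).not_gt h

theorem eventually_rpow_le_mul {δ p : ℝ} (hδ : 0 < δ) (hp : p < 1) :
    ∀ᶠ n : ℕ in atTop, (n : ℝ) ^ p ≤ δ * n := by
  have hlim : Tendsto (fun n : ℕ => (n : ℝ) ^ (-(1 - p))) atTop (nhds 0) :=
    (tendsto_rpow_neg_atTop (by linarith)).comp tendsto_natCast_atTop_atTop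
  filter_upwards [hlim.eventually (gt_mem_nhds hδ), eventually_gt_atTop 0] with n hn hn0
  have hnR : (0 : ℝ) < n := by exact_mod_cast hn0
  calc (n : ℝ) ^ p = (n : ℝ) ^ (-(1 - p)) * n := by
        rw [← Real.rpow_add_one hnR.ne']; ring_nf
    _ ≤ δ * n := by gcongr

theorem exists_substitution [Fintype V] {G F : SimpleGraph V} [DecidableRel G.Adj] {d : ℕ}
    (hreg : G.IsRegularOfDegree d) (hd : 0 < d) {α β : ℝ}
    (hF : ∀ A B : Set V, α ≤ A.ncard → β ≤ B.ncard → 1 ≤ eBetween F A B) {S : Set V}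
    (hα : ∀ z, α ≤ (G.neighborSet z \ S).ncard) (hβ : 2 * (β + S.ncard) ≤ Fintype.card V)
    (x y : V) :
    ∃ x₁ x₂ y₁ y₂ : V, x₁ ∉ S ∧ x₂ ∉ S ∧ y₁ ∉ S ∧ y₂ ∉ S ∧
      G.Adj x x₁ ∧ G.Adj y y₁ ∧ G.Adj x₂ y₂ ∧ F.Adj x₁ x₂ ∧ F.Adj y₁ y₂ := by
  set X : V → Set V := fun z => {v | v ∉ S ∧ ∃ a ∈ G.neighborSet z \ S, F.Adj a v}
  have hX : ∀ z, ((X z)ᶜ.ncard : ℝ) < β + S.ncard := fun z =>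
    ncard_compl_setOf_adj_lt hF (hα z) S
  have hlt : (X y)ᶜ.ncard < (X x).ncard := by
    have hsum : ((X x).ncard : ℝ) + (X x)ᶜ.ncard = Fintype.card V := by
      rw [← Nat.card_eq_fintype_card, ← Set.ncard_add_ncard_compl (X x)]; push_cast; rfl
    exact_mod_cast (by linarith [hX x, hX y] : ((X y)ᶜ.ncard : ℝ) < (X x).ncard)
  obtain ⟨x₂, ⟨hx₂, x₁, ⟨hxx₁, hx₁⟩, hx₁x₂⟩, y₂, ⟨hy₂, y₁, ⟨hyy₁, hy₁⟩, hy₁y₂⟩, hx₂y₂⟩ :=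
    exists_adj_of_ncard_compl_lt hreg hd hlt
  exact ⟨x₁, x₂, y₁, y₂, hx₁, hx₂, hy₁, hy₂, hxx₁, hyy₁, hx₂y₂, hx₁x₂, hy₁y₂⟩

/-- Observation 2.5 of the paper. Let `G`, `F` be edge-disjoint
graphs on `[n]` with `G` `d`-regular, `d ≥ ε c n`, and `F` having an edge between any
two large sets. Then for any vertices `x, y` and any set `S` with `|S| ≤ n^0.6`,
there exist `x₁, x₂, y₁, y₂ ∉ S` with `x x₁, y y₁, x₂ y₂ ∈ E(G)` and
`x₁ x₂, y₁ y₂ ∈ E(F)`. -/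
theorem substitution_observation (c ε δ : ℝ) (hc : 0 < c) (hε : 0 < ε)
    (hδ₀ : 0 < δ) (hδ₁ : δ ≤ ε * c / 5) :
    ∃ n₀ : ℕ, ∀ n : ℕ, n₀ ≤ n →
      ∀ (G F : SimpleGraph (Fin n)) (d : ℕ),
        Disjoint G F → IsRegN G d → ε * (c * (n : ℝ)) ≤ (d : ℝ) →
        (∀ A B : Set (Fin n), δ ^ 2 * (n : ℝ) ≤ (A.ncard : ℝ) →
          (1 / 2 - δ) * (n : ℝ) ≤ (B.ncard : ℝ) → 1 ≤ eBetween F A B) →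
        ∀ (x y : Fin n) (S : Set (Fin n)), (S.ncard : ℝ) ≤ (n : ℝ) ^ (0.6 : ℝ) →
        ∃ x₁ x₂ y₁ y₂ : Fin n,
          x₁ ∉ S ∧ x₂ ∉ S ∧ y₁ ∉ S ∧ y₂ ∉ S ∧
          G.Adj x x₁ ∧ G.Adj y y₁ ∧ G.Adj x₂ y₂ ∧ F.Adj x₁ x₂ ∧ F.Adj y₁ y₂ := by
  classical
  obtain ⟨n₀, hn₀⟩ := eventually_atTop.1 (eventually_rpow_le_mul hδ₀ (by norm_num : (0.6 : ℝ) < 1))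
  refine ⟨n₀, fun n hn G F d _ hreg hd hF x y S hS => ?_⟩
  have hSδ : (S.ncard : ℝ) ≤ δ * n := hS.trans (hn₀ n hn)
  have hreg' := hreg.isRegularOfDegree
  have hdn : (d : ℝ) < n := by
    exact_mod_cast Fintype.card_fin n ▸ hreg'.degree_eq x ▸ G.degree_lt_card_verts x
  have hεcn : 0 < ε * (c * n) := by
    have : (0 : ℝ) < n := by linarith [d.cast_nonneg (α := ℝ)]
    positivity
  have hd5 : 5 * (δ * n) ≤ d := by nlinarith
  refine exists_substitution hreg' (by exact_mod_cast hεcn.trans_le hd) hF (fun z => ?_)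
    (by rw [Fintype.card_fin]; linarith) x y
  have hdiff : (d : ℝ) ≤ (G.neighborSet z \ S).ncard + S.ncard := by
    exact_mod_cast (hreg z).symm.trans_le (Set.ncard_le_ncard_sdiff_add_ncard _ S)
  nlinarith
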